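/- For every real x and every integer n ≥ 1, the function t ↦ t^{x−1}(log t)^n/(1−t) is integrable on (1/2, 1), and the neutrix limit as ε → 0⁺ of ∫_ε^1 t^{x−1} (log t)^n / (1−t) dt exists; that is, there exist a real number c and a negligible function N(ε) such that ∫_ε^1 t^{x−1}(log t)^n/(1−t) dt − N(ε) tends to c as ε → 0⁺. -/

import Mathlib

/-!
Expanding `1/(1-t) = ∑_{m<M} t^m + t^M/(1-t)` splits the integrand into the moments
`t^(x+m-1) (log t)^n` and a remainder. Since `t |log t| ≤ 1 - t`, the remainder is bounded on
`(0,1)` as soon as `x + M ≥ n + 1`, so its integral over `(ε,1)` has an ordinary limit.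
For the moments `J_k(ε) = ∫_ε^1 t^(a-1) (log t)^k dt`, differentiating `t^a (log t)^(k+1)` gives
`a J_{k+1}(ε) + (k+1) J_k(ε) = -ε^a (log ε)^(k+1)`; by induction on `k`, `J_k` is a constant
plus multiples of `ε^a (log ε)^j`, which are negligible for `a < 0` and tend to `0` for `a > 0`
(for `a = 0`, `J_k` is a multiple of `(log ε)^(k+1)`).
-/

open MeasureTheory Real Filter Set

/-- A negligible function: a finite real linear combination of `ε ↦ ε^λ (log ε)^k`
with `λ < 0` real and `k ∈ ℕ`, and `ε ↦ (log ε)^k` with `k ≥ 1`. -/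
def Negligible (N : ℝ → ℝ) : Prop :=
  ∃ (s : Finset (ℝ × ℕ)) (c : ℝ × ℕ → ℝ) (T : Finset ℕ) (d : ℕ → ℝ),
    (∀ p ∈ s, p.1 < 0) ∧ (∀ k ∈ T, 1 ≤ k) ∧
    ∀ ε : ℝ, N ε = (∑ p ∈ s, c p * ε ^ p.1 * Real.log ε ^ p.2) +
      ∑ k ∈ T, d k * Real.log ε ^ k

/-- `NeutrixLim F c` : the neutrix limit of `F ε` as `ε → 0⁺` is `c`, i.e. there is a
negligible function `N` with `F ε − N ε → c` as `ε → 0⁺`. -/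
def NeutrixLim (F : ℝ → ℝ) (c : ℝ) : Prop :=
  ∃ N : ℝ → ℝ, Negligible N ∧
    Tendsto (fun ε => F ε - N ε) (nhdsWithin 0 (Set.Ioi 0)) (nhds c)

open scoped Topology

lemma Finset.sum_union_ite_add_mul {α R : Type*} [DecidableEq α] [NonUnitalNonAssocSemiring R]
    (s₁ s₂ : Finset α) (c₁ c₂ g : α → R) :
    ∑ p ∈ s₁ ∪ s₂,
        ((if p ∈ s₁ then c₁ p else 0) + (if p ∈ s₂ then c₂ p else 0)) * g p
      = ∑ p ∈ s₁, c₁ p * g p + ∑ p ∈ s₂, c₂ p * g p := by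
  simp only [add_mul, ite_mul, zero_mul, Finset.sum_add_distrib, Finset.sum_ite_mem,
    Finset.union_inter_cancel_left, Finset.union_inter_cancel_right]

namespace Negligible

lemma zero : Negligible 0 :=
  ⟨∅, 0, ∅, 0, by simp, by simp, by simp⟩

lemma add {N₁ N₂ : ℝ → ℝ} (h₁ : Negligible N₁) (h₂ : Negligible N₂) :
    Negligible (N₁ + N₂) := by
  classical
  obtain ⟨s₁, c₁, T₁, d₁, hs₁, hT₁, hN₁⟩ := h₁
  obtain ⟨s₂, c₂, T₂, d₂, hs₂, hT₂, hN₂⟩ := h₂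
  refine ⟨s₁ ∪ s₂,
    fun p => (if p ∈ s₁ then c₁ p else 0) + (if p ∈ s₂ then c₂ p else 0), T₁ ∪ T₂,
    fun k => (if k ∈ T₁ then d₁ k else 0) + (if k ∈ T₂ then d₂ k else 0),
    ?_, ?_, fun ε => ?_⟩
  · simp only [Finset.mem_union]
    rintro p (hp | hp)
    exacts [hs₁ p hp, hs₂ p hp]
  · simp only [Finset.mem_union]
    rintro k (hk | hk)
    exacts [hT₁ k hk, hT₂ k hk]
  · simp only [Pi.add_apply, hN₁, hN₂, mul_assoc, Finset.sum_union_ite_add_mul]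
    ring

lemma const_mul {N : ℝ → ℝ} (h : Negligible N) (r : ℝ) :
    Negligible (fun ε => r * N ε) := by
  obtain ⟨s, c, T, d, hs, hT, hN⟩ := h
  refine ⟨s, r • c, T, r • d, hs, hT, fun ε => ?_⟩
  simp only [hN, mul_add, Finset.mul_sum, Pi.smul_apply, smul_eq_mul, mul_assoc]

lemma rpow_mul_log_pow {a : ℝ} (ha : a < 0) (k : ℕ) :
    Negligible (fun ε => ε ^ a * Real.log ε ^ k) :=
  ⟨{(a, k)}, 1, ∅, 0, by simpa using ha, by simp, by simp⟩

lemma log_pow {k : ℕ} (hk : 1 ≤ k) : Negligible (fun ε => Real.log ε ^ k) :=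
  ⟨∅, 0, {k}, 1, by simp, by simpa using hk, by simp⟩

end Negligible

namespace NeutrixLim

variable {F G : ℝ → ℝ} {c d : ℝ}

lemma of_tendsto (h : Tendsto F (𝓝[>] 0) (𝓝 c)) : NeutrixLim F c :=
  ⟨0, Negligible.zero, by simpa using h⟩

lemma of_negligible (h : Negligible F) : NeutrixLim F 0 :=
  ⟨F, h, by simp⟩

lemma congr' (hF : NeutrixLim F c) (h : F =ᶠ[𝓝[>] 0] G) : NeutrixLim G c := by
  obtain ⟨N, hN, hT⟩ := hF
  exact ⟨N, hN, hT.congr' (h.mono fun ε hε => by rw [hε])⟩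

lemma add (hF : NeutrixLim F c) (hG : NeutrixLim G d) :
    NeutrixLim (fun ε => F ε + G ε) (c + d) := by
  obtain ⟨N₁, hN₁, hT₁⟩ := hF
  obtain ⟨N₂, hN₂, hT₂⟩ := hG
  refine ⟨N₁ + N₂, hN₁.add hN₂, (hT₁.add hT₂).congr fun ε => ?_⟩
  simp only [Pi.add_apply]
  ring

lemma const_mul (hF : NeutrixLim F c) (r : ℝ) : NeutrixLim (fun ε => r * F ε) (r * c) := by
  obtain ⟨N, hN, hT⟩ := hF
  refine ⟨_, hN.const_mul r, (hT.const_mul r).congr fun ε => ?_⟩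
  ring

lemma exists_sum {ι : Type*} (s : Finset ι) {F : ι → ℝ → ℝ}
    (h : ∀ i ∈ s, ∃ c, NeutrixLim (F i) c) :
    ∃ c, NeutrixLim (fun ε => ∑ i ∈ s, F i ε) c := by
  classical
  induction s using Finset.induction with
  | empty => exact ⟨0, by simp [of_tendsto tendsto_const_nhds]⟩
  | insert i s hi ih =>
    obtain ⟨c, hc⟩ := h i (Finset.mem_insert_self i s)
    obtain ⟨d, hd⟩ := ih fun j hj => h j (Finset.mem_insert_of_mem hj)
    simpa only [Finset.sum_insert hi] using ⟨c + d, hc.add hd⟩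

end NeutrixLim

lemma neutrixLim_rpow_mul_log_pow {a : ℝ} {k : ℕ} (h : a ≠ 0 ∨ k ≠ 0) :
    NeutrixLim (fun ε => ε ^ a * Real.log ε ^ k) 0 := by
  rcases lt_trichotomy a 0 with ha | rfl | ha
  · exact .of_negligible (.rpow_mul_log_pow ha k)
  · have hk : 1 ≤ k := Nat.one_le_iff_ne_zero.2 (by simpa using h)
    simpa using NeutrixLim.of_negligible (Negligible.log_pow hk)
  · have h := (isLittleO_abs_log_rpow_rpow_nhdsGT_zero (k : ℝ)
      (neg_lt_zero.2 ha)).tendsto_div_nhds_zero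
    refine NeutrixLim.of_tendsto (tendsto_zero_iff_norm_tendsto_zero.2 (h.congr' ?_))
    filter_upwards [self_mem_nhdsWithin] with ε (hε : 0 < ε)
    rw [Real.rpow_natCast, Real.rpow_neg hε.le, div_inv_eq_mul, norm_mul, norm_pow,
      Real.norm_eq_abs, Real.norm_eq_abs, abs_of_pos (Real.rpow_pos_of_pos hε a), mul_comm]

section IntervalIntegral

variable {E : Type*} [NormedAddCommGroup E] [NormedSpace ℝ E]

lemma integral_Ioo_eq_sub_of_hasDerivAt [CompleteSpace E] {f P : ℝ → E} {a b : ℝ}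
    (hab : a ≤ b) (hP : ∀ t ∈ Icc a b, HasDerivAt P (f t) t) (hf : IntegrableOn f (Icc a b)) :
    ∫ t in Ioo a b, f t = P b - P a := by
  rw [← integral_Ioc_eq_integral_Ioo, ← intervalIntegral.integral_of_le hab]
  exact intervalIntegral.integral_eq_sub_of_hasDerivAt (by rwa [uIcc_of_le hab])
    ((intervalIntegrable_iff_integrableOn_Icc_of_le hab).2 hf)

lemma tendsto_setIntegral_Ioo_nhdsGT {f : ℝ → E} {a b : ℝ} (hab : a < b)
    (hf : IntegrableOn f (Ioo a b)) :
    Tendsto (fun ε => ∫ t in Ioo ε b, f t) (𝓝[>] a) (𝓝 (∫ t in Ioo a b, f t)) := by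
  have hcont := intervalIntegral.continuousOn_primitive_interval_left (μ := volume) (f := f)
    (by rwa [uIcc_of_le hab.le, integrableOn_Icc_iff_integrableOn_Ioo]) a left_mem_uIcc
  rw [uIcc_of_le hab.le] at hcont
  have h := hcont.tendsto.mono_left (nhdsWithin_le_of_mem (Icc_mem_nhdsGT hab))
  rw [intervalIntegral.integral_of_le hab.le, integral_Ioc_eq_integral_Ioo] at h
  refine h.congr' ?_
  filter_upwards [Ioc_mem_nhdsGT hab] with ε hε
  rw [intervalIntegral.integral_of_le hε.2, integral_Ioc_eq_integral_Ioo]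

end IntervalIntegral

lemma continuousOn_rpow_mul_log_pow (a : ℝ) (n : ℕ) :
    ContinuousOn (fun t : ℝ => t ^ a * Real.log t ^ n) (Ioi 0) :=
  ((continuousOn_id.rpow_const fun _ ht => Or.inl (ne_of_gt ht)).mul
    ((continuousOn_log.mono fun _ ht => ne_of_gt ht).pow n))

lemma integrableOn_rpow_mul_log_pow_Icc (a : ℝ) (n : ℕ) {ε b : ℝ} (hε : 0 < ε) :
    IntegrableOn (fun t : ℝ => t ^ a * Real.log t ^ n) (Icc ε b) :=
  ((continuousOn_rpow_mul_log_pow a n).mono fun _ ht => hε.trans_le ht.1).integrableOn_Icc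

noncomputable def logMoment (a : ℝ) (n : ℕ) (ε : ℝ) : ℝ :=
  ∫ t in Ioo ε 1, t ^ (a - 1) * Real.log t ^ n

section logMoment

variable {a ε : ℝ}

lemma mul_logMoment_zero (hε : 0 < ε) (hε₁ : ε ≤ 1) :
    a * logMoment a 0 ε = 1 - ε ^ a := by
  have hderiv : ∀ t ∈ Icc ε 1,
      HasDerivAt (fun t => t ^ a) (a * (t ^ (a - 1) * Real.log t ^ 0)) t :=
    fun t ht => by
      simpa using Real.hasDerivAt_rpow_const (p := a) (Or.inl (hε.trans_le ht.1).ne')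
  rw [logMoment, ← integral_const_mul, integral_Ioo_eq_sub_of_hasDerivAt hε₁ hderiv
    ((integrableOn_rpow_mul_log_pow_Icc (a - 1) 0 hε).const_mul a), Real.one_rpow]

lemma mul_logMoment_succ_add (n : ℕ) (hε : 0 < ε) (hε₁ : ε ≤ 1) :
    a * logMoment a (n + 1) ε + (n + 1) * logMoment a n ε =
      -(ε ^ a * Real.log ε ^ (n + 1)) := by
  have hint (k : ℕ) := integrableOn_rpow_mul_log_pow_Icc (a - 1) k (b := 1) hε
  have hderiv : ∀ t ∈ Icc ε 1, HasDerivAt (fun t => t ^ a * Real.log t ^ (n + 1))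
      (a * (t ^ (a - 1) * Real.log t ^ (n + 1)) + (n + 1) * (t ^ (a - 1) * Real.log t ^ n)) t := by
    intro t ht
    have ht₀ : 0 < t := hε.trans_le ht.1
    refine ((Real.hasDerivAt_rpow_const (p := a) (Or.inl ht₀.ne')).mul
      ((Real.hasDerivAt_log ht₀.ne').pow (n + 1))).congr_deriv ?_
    rw [Real.rpow_sub_one ht₀.ne']
    push_cast [Pi.pow_apply]
    field_simp
  rw [logMoment, logMoment, ← integral_const_mul, ← integral_const_mul,
    ← integral_add (((hint (n + 1)).mono_set Ioo_subset_Icc_self).const_mul a)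
      (((hint n).mono_set Ioo_subset_Icc_self).const_mul _),
    integral_Ioo_eq_sub_of_hasDerivAt hε₁ hderiv
      (((hint _).const_mul _).add ((hint _).const_mul _))]
  simp

end logMoment

theorem exists_neutrixLim_logMoment (a : ℝ) (n : ℕ) : ∃ c, NeutrixLim (logMoment a n) c := by
  have hIoc : Ioc 0 1 ∈ 𝓝[>] (0 : ℝ) := Ioc_mem_nhdsGT one_pos
  by_cases ha : a = 0
  · subst ha
    refine ⟨-(1 / (n + 1)) * 0,
      ((neutrixLim_rpow_mul_log_pow (a := 0) (Or.inr n.add_one_ne_zero)).const_mul _).congr' ?_⟩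
    filter_upwards [hIoc] with ε hε
    have h := mul_logMoment_succ_add (a := 0) n hε.1 hε.2
    field_simp
    linarith
  induction n with
  | zero =>
    refine ⟨1 / a + -(1 / a) * 0, ((NeutrixLim.of_tendsto tendsto_const_nhds).add
      ((neutrixLim_rpow_mul_log_pow (k := 0) (Or.inl ha)).const_mul _)).congr' ?_⟩
    filter_upwards [hIoc] with ε hε
    have h := mul_logMoment_zero (a := a) hε.1 hε.2
    field_simp
    linarith
  | succ n ih =>
    obtain ⟨c, hc⟩ := ih
    refine ⟨_, (((neutrixLim_rpow_mul_log_pow (k := n + 1) (Or.inl ha)).const_mul (-(1 / a))).add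
      (hc.const_mul (-((n + 1) / a)))).congr' ?_⟩
    filter_upwards [hIoc] with ε hε
    have h := mul_logMoment_succ_add (a := a) n hε.1 hε.2
    field_simp
    linarith

lemma abs_log_le_one_sub_div {t : ℝ} (ht₀ : 0 < t) (ht₁ : t ≤ 1) :
    |Real.log t| ≤ (1 - t) / t := by
  rw [abs_of_nonpos (Real.log_nonpos ht₀.le ht₁), sub_div, div_self ht₀.ne', one_div]
  linarith [Real.one_sub_inv_le_log_of_pos ht₀]

lemma abs_rpow_mul_log_pow_div_one_sub_le_one {b t : ℝ} {n : ℕ} (hn : n ≠ 0)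
    (hb : n + 1 ≤ b) (ht : t ∈ Ioo 0 1) : |t ^ (b - 1) * Real.log t ^ n / (1 - t)| ≤ 1 := by
  obtain ⟨ht₀, ht₁⟩ := ht
  have h₁ : 0 < 1 - t := sub_pos.2 ht₁
  have hlog : (t * |Real.log t|) ^ n ≤ 1 - t := calc
    (t * |Real.log t|) ^ n ≤ (1 - t) ^ n := by
      gcongr
      rw [← le_div_iff₀' ht₀]
      exact abs_log_le_one_sub_div ht₀ ht₁.le
    _ ≤ 1 - t := pow_le_of_le_one h₁.le (by linarith) hn
  have hrpow : t ^ (b - 1) = t ^ (b - 1 - n) * t ^ n := by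
    rw [← Real.rpow_natCast, ← Real.rpow_add ht₀, sub_add_cancel]
  rw [abs_div, abs_mul, abs_pow, abs_of_pos (Real.rpow_pos_of_pos ht₀ _), abs_of_pos h₁,
    div_le_one h₁, hrpow, mul_assoc, ← mul_pow]
  simpa using mul_le_mul (Real.rpow_le_one ht₀.le ht₁.le (by linarith)) hlog
    (by positivity) zero_le_one

lemma integrableOn_rpow_mul_log_pow_div_one_sub {b : ℝ} {n : ℕ} (hn : n ≠ 0)
    (hb : n + 1 ≤ b) :
    IntegrableOn (fun t : ℝ => t ^ (b - 1) * Real.log t ^ n / (1 - t)) (Ioo 0 1) := by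
  refine Measure.integrableOn_of_bounded (M := 1) measure_Ioo_lt_top.ne
    (Measurable.aestronglyMeasurable (by fun_prop)) ?_
  filter_upwards [ae_restrict_mem measurableSet_Ioo] with t ht
  exact abs_rpow_mul_log_pow_div_one_sub_le_one hn hb ht

lemma rpow_mul_log_pow_div_one_sub_eq_sum_add (x : ℝ) (n M : ℕ) {t : ℝ} (ht₀ : 0 < t)
    (ht₁ : t < 1) :
    t ^ (x - 1) * Real.log t ^ n / (1 - t) =
      ∑ m ∈ Finset.range M, t ^ (x + m - 1) * Real.log t ^ n +
        t ^ (x + M - 1) * Real.log t ^ n / (1 - t) := by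
  have hrpow (m : ℕ) : t ^ (x + m - 1) = t ^ (x - 1) * t ^ m := by
    rw [← Real.rpow_natCast, ← Real.rpow_add ht₀, add_sub_right_comm]
  simp only [hrpow, mul_assoc, mul_comm (t ^ _ : ℝ), ← Finset.mul_sum, geom_sum_eq ht₁.ne]
  have : 1 - t ≠ 0 := sub_ne_zero.2 ht₁.ne'
  have : t - 1 ≠ 0 := sub_ne_zero.2 ht₁.ne
  field_simp
  ring

theorem stmt13 (x : ℝ) (n : ℕ) (hn : 1 ≤ n) :
    MeasureTheory.IntegrableOn (fun t => t ^ (x - 1) * Real.log t ^ n / (1 - t))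
      (Set.Ioo (1/2 : ℝ) 1) ∧
    ∃ c : ℝ, NeutrixLim (fun ε => ∫ t in Set.Ioo ε 1,
      t ^ (x - 1) * Real.log t ^ n / (1 - t)) c := by
  -- `M` is large enough for the remainder to be bounded on `(0,1)`.
  set M := ⌈(n : ℝ) + 1 - x⌉₊
  have hM : (n : ℝ) + 1 ≤ x + M := by linarith [Nat.le_ceil ((n : ℝ) + 1 - x)]
  have htail := integrableOn_rpow_mul_log_pow_div_one_sub (Nat.one_le_iff_ne_zero.1 hn) hM
  have hsplit {ε : ℝ} (hε : 0 < ε) := fun t (ht : t ∈ Ioo ε 1) =>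
    rpow_mul_log_pow_div_one_sub_eq_sum_add x n M (hε.trans ht.1) ht.2
  have hmoment {ε : ℝ} (hε : 0 < ε) (m : ℕ) :
      IntegrableOn (fun t => t ^ (x + m - 1) * Real.log t ^ n) (Ioo ε 1) :=
    (integrableOn_rpow_mul_log_pow_Icc _ n hε).mono_set Ioo_subset_Icc_self
  have htail' {ε : ℝ} (hε : 0 < ε) := htail.mono_set (Ioo_subset_Ioo_left hε.le)
  refine ⟨IntegrableOn.congr_fun ((integrable_finsetSum _ fun m _ => hmoment one_half_pos m).add
    (htail' one_half_pos)) (fun t ht => (hsplit one_half_pos t ht).symm) measurableSet_Ioo, ?_⟩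
  obtain ⟨c, hc⟩ := NeutrixLim.exists_sum (Finset.range M)
    fun m _ => exists_neutrixLim_logMoment (x + m) n
  have hlim := tendsto_setIntegral_Ioo_nhdsGT one_pos htail
  refine ⟨c + _, (hc.add (.of_tendsto hlim)).congr' ?_⟩
  filter_upwards [self_mem_nhdsWithin] with ε (hε : 0 < ε)
  rw [setIntegral_congr_fun measurableSet_Ioo (hsplit hε),
    integral_add (integrable_finsetSum _ fun m _ => hmoment hε m) (htail' hε),
    integral_finsetSum _ fun m _ => hmoment hε m]
  rfl
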